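/- First derivative of the stationarity constraint along a symmetric curve: let a, b, d : ℝ → (0,1) be differentiable at c = 1/2 with b(1/2) = a(1/2), b'(1/2) = −a'(1/2), and d'(1/2) = 0. Then the derivative at c = 1/2 of c ↦ f(a(c), b(c), c, d(c)) equals 2·(a² − d²)·(S_o'(a) − S_o'(d)) + a'·( 2a·(S_o'(a) − S_o'(d)) − S_o''(a)·(a − d)² ), where a, d, a' are evaluated at 1/2. In particular, if this derivative vanishes and 2a·(S_o'(a) − S_o'(d)) − S_o''(a)·(a − d)² ≠ 0, then a'(1/2) = 2(d² − a²)(S_o'(a) − S_o'(d)) / ( 2a(S_o'(a) − S_o'(d)) − S_o''(a)(a − d)² ). -/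

import Mathlib

open Real

noncomputable def So (z : ℝ) : ℝ := -(1/2) * (z * Real.log z + (1 - z) * Real.log (1 - z))

noncomputable def So' (z : ℝ) : ℝ := -(1/2) * Real.log (z / (1 - z))

noncomputable def So'' (z : ℝ) : ℝ := -(1/2) * (1/z + 1/(1 - z))

noncomputable def f (a b c d : ℝ) : ℝ :=
  So' a * (c * d * (a - d) - (1 - c) * b * (b - d)) +
  So' b * (c * a * (a - d) - (1 - c) * d * (b - d)) +
  So' d * (c * (d^2 - a^2) + (1 - c) * (b^2 - d^2))

lemma hasDerivAt_So' (z : ℝ) (hz : z ∈ Set.Ioo (0:ℝ) 1) :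
    HasDerivAt So' (So'' z) z := by
  obtain ⟨hz0, hz1⟩ := hz
  have h1 : (1 : ℝ) - z ≠ 0 := by linarith
  have hlog : HasDerivAt Real.log z⁻¹ z := Real.hasDerivAt_log hz0.ne'
  have hsub : HasDerivAt (fun c : ℝ => 1 - c) (-1) z := by
    simpa using (hasDerivAt_id z).const_sub 1
  have hlog2 : HasDerivAt (fun c : ℝ => Real.log (1 - c)) ((1 - z)⁻¹ * (-1)) z :=
    (Real.hasDerivAt_log h1).comp z hsub
  have hg : HasDerivAt (fun c : ℝ => -(1/2) * (Real.log c - Real.log (1 - c)))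
      (-(1/2) * (z⁻¹ - (1 - z)⁻¹ * (-1))) z := (hlog.sub hlog2).const_mul _
  have heq : (fun c : ℝ => -(1/2) * (Real.log c - Real.log (1 - c))) =ᶠ[nhds z] So' := by
    filter_upwards [isOpen_Ioo.mem_nhds (⟨hz0, hz1⟩ : z ∈ Set.Ioo (0:ℝ) 1)] with c hc
    have hc1 : (1:ℝ) - c ≠ 0 := by linarith [hc.2]
    simp [So', Real.log_div hc.1.ne' hc1]
  have := hg.congr_of_eventuallyEq heq.symm
  refine this.congr_deriv ?_
  simp [So'']

/-- First derivative of the stationarity constraint `f` along a symmetric curve of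
bipodal parameters, evaluated at `c = 1/2`; and the resulting formula for `ȧ(1/2)`. -/
theorem fdot_at_half (a b d : ℝ → ℝ) (a' b' d' a₀ d₀ : ℝ)
    (haI : ∀ c, a c ∈ Set.Ioo (0:ℝ) 1) (hbI : ∀ c, b c ∈ Set.Ioo (0:ℝ) 1)
    (hdI : ∀ c, d c ∈ Set.Ioo (0:ℝ) 1)
    (ha : HasDerivAt a a' (1/2)) (hb : HasDerivAt b b' (1/2))
    (hd : HasDerivAt d d' (1/2))
    (ha0 : a (1/2) = a₀) (hd0 : d (1/2) = d₀)
    (hba : b (1/2) = a (1/2)) (hb' : b' = -a') (hd' : d' = 0) :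
    HasDerivAt (fun c => f (a c) (b c) c (d c))
      (2 * (a₀^2 - d₀^2) * (So' a₀ - So' d₀)
        + a' * (2 * a₀ * (So' a₀ - So' d₀) - So'' a₀ * (a₀ - d₀)^2)) (1/2) ∧
    (2 * (a₀^2 - d₀^2) * (So' a₀ - So' d₀)
        + a' * (2 * a₀ * (So' a₀ - So' d₀) - So'' a₀ * (a₀ - d₀)^2) = 0 →
      2 * a₀ * (So' a₀ - So' d₀) - So'' a₀ * (a₀ - d₀)^2 ≠ 0 →
      a' = 2 * (d₀^2 - a₀^2) * (So' a₀ - So' d₀) /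
             (2 * a₀ * (So' a₀ - So' d₀) - So'' a₀ * (a₀ - d₀)^2)) := by
  constructor
  · have hid : HasDerivAt (fun c : ℝ => c) 1 (1/2) := hasDerivAt_id _
    have hom : HasDerivAt (fun c : ℝ => 1 - c) (-1) (1/2) := by
      simpa using hid.const_sub 1
    have hA : HasDerivAt (fun c => So' (a c)) (So'' (a (1/2)) * a') (1/2) :=
      (hasDerivAt_So' _ (haI _)).comp _ ha
    have hB : HasDerivAt (fun c => So' (b c)) (So'' (b (1/2)) * b') (1/2) :=
      (hasDerivAt_So' _ (hbI _)).comp _ hb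
    have hD : HasDerivAt (fun c => So' (d c)) (So'' (d (1/2)) * d') (1/2) :=
      (hasDerivAt_So' _ (hdI _)).comp _ hd
    have H :=
      ((hA.mul (((hid.mul hd).mul (ha.sub hd)).sub ((hom.mul hb).mul (hb.sub hd)))).add
        (hB.mul (((hid.mul ha).mul (ha.sub hd)).sub ((hom.mul hd).mul (hb.sub hd))))).add
        (hD.mul ((hid.mul ((hd.pow 2).sub (ha.pow 2))).add
          (hom.mul ((hb.pow 2).sub (hd.pow 2)))))
    refine H.congr_deriv ?_
    simp only [Pi.mul_apply, Pi.sub_apply, Pi.add_apply, Pi.pow_apply, hba, ha0, hd0, hb', hd']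
    ring
  · intro h0 hne
    field_simp
    nlinarith [h0, sq_nonneg a']
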